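/- arXiv:1808.02626 — 6 statements merged into one kernel-verified Lean document; each statement's English description precedes it below -/
import Mathlib

section
/- If positive reals Q_i^{(a)} satisfy the A_n Q-system and Y_i^{(a)} is defined by Y_i^{(a)} = Q_{i-1}^{(a)} Q_{i+1}^{(a)} / ∏_{b∼a} Q_i^{(b)}, then the Y-system holds: (1+Y_i^{(a)})^2 / ((1+Y_{i-1}^{(a)})(1+Y_{i+1}^{(a)})) = ∏_{b=1}^n (1 + (Y_i^{(b)})^{-1})^{C_{ab}}, where Y_0^{(a)} = 0. -/
/-- The Cartan matrix of type `A_n` (indices in `Fin n`). -/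
def cartanA (n : ℕ) (a b : Fin n) : ℤ :=
  if a = b then 2 else if (a : ℕ) + 1 = (b : ℕ) ∨ (b : ℕ) + 1 = (a : ℕ) then -1 else 0

/-- The product `∏_{b ∼ a} Q_i^{(b)}` over Dynkin-diagram neighbours of `a`. -/
noncomputable def nbrProd (n : ℕ) (Q : Fin n → ℕ → ℝ) (a : Fin n) (i : ℕ) : ℝ :=
  ∏ b ∈ Finset.univ.filter
      (fun b : Fin n => (a : ℕ) + 1 = (b : ℕ) ∨ (b : ℕ) + 1 = (a : ℕ)), Q b i

/-! The Q-system gives `1 + Y_i^{(a)} = (Q_i^{(a)})² / ∏_{b∼a} Q_i^{(b)}` (also for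
`i = 0`) and `1 + (Y_i^{(a)})⁻¹ = (Q_i^{(a)})² / (Q_{i-1}^{(a)} Q_{i+1}^{(a)})`. Since row `a` of the
Cartan matrix is `2` at `a` and `-1` at the neighbours of `a`, both sides of the Y-system become the
same ratio of these products. -/

open Finset

namespace AnQSystem

variable {n : ℕ}

def neighbors (a : Fin n) : Finset (Fin n) :=
  univ.filter fun b : Fin n => (a : ℕ) + 1 = (b : ℕ) ∨ (b : ℕ) + 1 = (a : ℕ)

theorem nbrProd_eq_prod_neighbors (Q : Fin n → ℕ → ℝ) (a : Fin n) (i : ℕ) :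
    nbrProd n Q a i = ∏ b ∈ neighbors a, Q b i :=
  rfl

theorem zpow_cartanA {G : Type*} [DivisionMonoid G] (a b : Fin n) (x : G) :
    x ^ cartanA n a b = (if a = b then x ^ 2 else 1) * (if b ∈ neighbors a then x⁻¹ else 1) := by
  unfold cartanA neighbors
  split_ifs <;> simp_all

theorem prod_zpow_cartanA {G : Type*} [DivisionCommMonoid G] (f : Fin n → G) (a : Fin n) :
    ∏ b, f b ^ cartanA n a b = f a ^ 2 * (∏ b ∈ neighbors a, f b)⁻¹ := by
  simp only [zpow_cartanA, prod_mul_distrib, prod_ite_eq, mem_univ, if_true,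
    ← prod_filter, prod_inv_distrib]
  simp [neighbors]

theorem one_add_div_of_sq_eq_add {K : Type*} [Field K] {q x s : K} (h : q ^ 2 = x + s)
    (hs : s ≠ 0) : 1 + x / s = q ^ 2 / s := by
  rw [h]
  field_simp
  ring

theorem one_add_inv_div_of_sq_eq_add {K : Type*} [Field K] {q x s : K} (h : q ^ 2 = x + s)
    (hx : x ≠ 0) : 1 + (x / s)⁻¹ = q ^ 2 / x := by
  rw [inv_div, h]
  field_simp

end AnQSystem

open AnQSystem

/-- If positive reals `Q_i^{(a)}` (with `Q_0^{(a)} = 1`) satisfy the `A_n` Q-system and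
`Y_i^{(a)} = Q_{i-1}^{(a)} Q_{i+1}^{(a)} / ∏_{b∼a} Q_i^{(b)}` for `i ≥ 1`, `Y_0^{(a)} = 0`,
then the Y-system holds:
`(1+Y_i^{(a)})^2 / ((1+Y_{i-1}^{(a)})(1+Y_{i+1}^{(a)})) = ∏_b (1+(Y_i^{(b)})⁻¹)^{C_{ab}}`. -/
theorem Y_system (n : ℕ) (Q : Fin n → ℕ → ℝ)
    (hpos : ∀ a i, 0 < Q a i) (h0 : ∀ a, Q a 0 = 1)
    (hQ : ∀ a i, 1 ≤ i → Q a i ^ 2 = Q a (i - 1) * Q a (i + 1) + nbrProd n Q a i)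
    (Y : Fin n → ℕ → ℝ) (hY0 : ∀ a, Y a 0 = 0)
    (hY : ∀ a i, 1 ≤ i → Y a i = Q a (i - 1) * Q a (i + 1) / nbrProd n Q a i)
    (a : Fin n) (i : ℕ) (hi : 1 ≤ i) :
    (1 + Y a i) ^ 2 / ((1 + Y a (i - 1)) * (1 + Y a (i + 1))) =
      ∏ b, (1 + (Y b i)⁻¹) ^ (cartanA n a b) := by
  have hQne (b : Fin n) (j : ℕ) : Q b j ≠ 0 := (hpos b j).ne'
  have hPne (b : Fin n) (j : ℕ) : nbrProd n Q b j ≠ 0 :=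
    (prod_pos fun c _ => hpos c j).ne'
  have hY_add (b : Fin n) : ∀ j, 1 + Y b j = Q b j ^ 2 / nbrProd n Q b j
    | 0 => by simp [hY0, h0, nbrProd]
    | j + 1 => by
      rw [hY b _ j.succ_pos]
      exact one_add_div_of_sq_eq_add (hQ b _ j.succ_pos) (hPne b _)
  have hY_inv (b : Fin n) : 1 + (Y b i)⁻¹ = Q b i ^ 2 / (Q b (i - 1) * Q b (i + 1)) := by
    rw [hY b i hi]
    exact one_add_inv_div_of_sq_eq_add (hQ b i hi) (mul_ne_zero (hQne b _) (hQne b _))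
  have hnbr : ∏ b ∈ neighbors a, (1 + (Y b i)⁻¹) =
      nbrProd n Q a i ^ 2 / (nbrProd n Q a (i - 1) * nbrProd n Q a (i + 1)) := by
    simp only [hY_inv, prod_div_distrib, prod_mul_distrib, prod_pow, nbrProd_eq_prod_neighbors]
  rw [prod_zpow_cartanA, hnbr, hY_inv, hY_add, hY_add, hY_add]
  have := hQne a i; have := hQne a (i - 1); have := hQne a (i + 1)
  have := hPne a i; have := hPne a (i - 1); have := hPne a (i + 1)
  field_simp
end

section
/- Let p_1,...,p_{n+1} > 0 with p_1 + ⋯ + p_{n+1} = 1, let u = p_1⋯p_{n+1}, define z_a = u^{-a/(n+1)} p_1⋯p_a for 0 ≤ a ≤ n+1 (so z_0 = z_{n+1} = 1), and ν_a = p_{a+1} + ⋯ + p_{n+1}. Then for each a ∈ [1,n]: z_a · ∂/∂z_a [log(∑_{j=1}^{n+1} z_j/z_{j-1})] = δ_{a,1} − ∑_{b=1}^n C_{ab} ν_b, where C is the A_n Cartan matrix and the derivative treats z_1,...,z_n as independent variables (z_0 = z_{n+1} = 1 fixed). -/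
/-- The Cartan matrix of type `A_n` on natural-number indices `1,…,n`. -/
def cartanN (a b : ℕ) : ℤ :=
  if a = b then 2 else if a + 1 = b ∨ b + 1 = a then -1 else 0

/-!
At the given point every summand of `Q` is `z_j / z_{j-1} = u^{-1/(n+1)} p_j`, so
`Q = u^{-1/(n+1)}`. Only the summands `z_a / z_{a-1}` and `z_{a+1} / z_a` depend on `z_a`, hence
`z_a ∂_a log Q = (z_a / z_{a-1} - z_{a+1} / z_a) / Q = p_a - p_{a+1}`. On the other side the
Cartan matrix acts as a discrete second difference, and `ν_{b-1} - ν_b = p_b`, `ν_0 = 1`,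
`ν_{n+1} = 0` turn the right-hand side into `p_a - p_{a+1}` as well.
-/

open Finset Function

theorem sum_cartanN_mul {R : Type*} [CommRing R] {n a : ℕ} (f : ℕ → R) (ha1 : 1 ≤ a)
    (ha : a ≤ n) :
    ∑ b ∈ Icc 1 n, (cartanN a b : R) * f b = 2 * f a - f (a - 1) - f (a + 1)
      + (if a = 1 then f 0 else 0) + (if a = n then f (n + 1) else 0) := by
  have hpoint : ∀ b, (cartanN a b : R) * f b = (if a = b then 2 * f b else 0)
      - (if a + 1 = b then f b else 0) - (if a - 1 = b then f b else 0) := by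
    intro b
    unfold cartanN
    split_ifs <;> first | omega | (push_cast; ring)
  simp only [hpoint, sum_sub_distrib, sum_ite_eq, mem_Icc]
  split_ifs <;> first | omega | (subst_vars; ring)

section RatioSum

variable {K : Type*} [Field K]

/-- The paper's `Q`, with the boundary values `z_0`, `z_{n+1}` taken from `w` rather than fixed
to `1`. -/
def ratioSum (n : ℕ) (w : ℕ → K) : K := ∑ j ∈ Icc 1 (n + 1), w j / w (j - 1)

theorem ratioSum_update {n a : ℕ} (z : ℕ → K) (ha1 : 1 ≤ a) (ha : a ≤ n) (s : K) :
    ratioSum n (update z a s) = s / z (a - 1) + z (a + 1) / s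
      + ∑ j ∈ ((Icc 1 (n + 1)).erase a).erase (a + 1), z j / z (j - 1) := by
  have hmem_a : a ∈ Icc 1 (n + 1) := mem_Icc.mpr ⟨ha1, by omega⟩
  have hmem_a1 : a + 1 ∈ (Icc 1 (n + 1)).erase a := by simp; omega
  rw [ratioSum, ← add_sum_erase _ _ hmem_a, ← add_sum_erase _ _ hmem_a1, ← add_assoc]
  congr 1
  · simp [update_of_ne (show a - 1 ≠ a by omega)]
  · refine sum_congr rfl fun j hj => ?_
    simp only [mem_erase, mem_Icc] at hj
    rw [update_of_ne (by omega), update_of_ne (by omega)]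

end RatioSum

theorem hasDerivAt_ratioSum_update {𝕜 : Type*} [NontriviallyNormedField 𝕜] {n a : ℕ}
    (z : ℕ → 𝕜) (ha1 : 1 ≤ a) (ha : a ≤ n) {s : 𝕜} (hs : s ≠ 0) :
    HasDerivAt (fun t => ratioSum n (update z a t)) ((z (a - 1))⁻¹ - z (a + 1) / s ^ 2) s := by
  simp only [ratioSum_update z ha1 ha]
  have h := (((hasDerivAt_id s).div_const (z (a - 1))).add
    ((hasDerivAt_inv hs).const_mul (z (a + 1)))).add_const
    (∑ j ∈ ((Icc 1 (n + 1)).erase a).erase (a + 1), z j / z (j - 1))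
  rw [show (z (a - 1))⁻¹ - z (a + 1) / s ^ 2 = 1 / z (a - 1) + z (a + 1) * -(s ^ 2)⁻¹ by ring]
  refine h.congr_of_eventuallyEq (Filter.Eventually.of_forall fun t => ?_)
  simp [div_eq_mul_inv]

theorem mul_deriv_log_ratioSum_update {n a : ℕ} (z : ℕ → ℝ) (ha1 : 1 ≤ a) (ha : a ≤ n)
    (hza : z a ≠ 0) (hQ : ratioSum n z ≠ 0) :
    z a * deriv (fun t => Real.log (ratioSum n (update z a t))) (z a)
      = (z a / z (a - 1) - z (a + 1) / z a) / ratioSum n z := by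
  have h := (hasDerivAt_ratioSum_update z ha1 ha hza).log (by rwa [update_eq_self])
  rw [update_eq_self] at h
  rw [h.deriv]
  field_simp

theorem rpow_mul_prod_Icc_succ {u : ℝ} (hu : 0 < u) (c : ℝ) (p : ℕ → ℝ) (k : ℕ) :
    u ^ (-((k + 1 : ℕ) : ℝ) / c) * ∏ j ∈ Icc 1 (k + 1), p j
      = u ^ (-1 / c) * p (k + 1) * (u ^ (-(k : ℝ) / c) * ∏ j ∈ Icc 1 k, p j) := by
  rw [prod_Icc_succ_top (by omega), show -((k + 1 : ℕ) : ℝ) / c = -(k : ℝ) / c + -1 / c by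
    push_cast; ring, Real.rpow_add hu]
  ring

theorem equation_of_state_general (n : ℕ) (p : ℕ → ℝ)
    (hp : ∀ a ∈ Finset.Icc 1 (n + 1), 0 < p a)
    (hsum : ∑ a ∈ Finset.Icc 1 (n + 1), p a = 1) :
    ∀ a, 1 ≤ a → a ≤ n →
      (let u : ℝ := ∏ j ∈ Finset.Icc 1 (n + 1), p j
       let zv : ℕ → ℝ := fun b => u ^ (-(b : ℝ) / (n + 1)) * ∏ j ∈ Finset.Icc 1 b, p j
       let ν : ℕ → ℝ := fun b => ∑ j ∈ Finset.Icc (b + 1) (n + 1), p j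
       zv a * deriv (fun t : ℝ =>
          Real.log (∑ j ∈ Finset.Icc 1 (n + 1),
            (if j = a then t else zv j) / (if j - 1 = a then t else zv (j - 1)))) (zv a)
        = (if a = 1 then 1 else 0) - ∑ b ∈ Finset.Icc 1 n, (cartanN a b : ℝ) * ν b) := by
  intro a ha1 ha u zv ν
  have hu : 0 < u := prod_pos hp
  set r : ℝ := u ^ (-1 / ((n : ℝ) + 1))
  have hr : 0 < r := Real.rpow_pos_of_pos hu _
  have hzv_pos : ∀ k ≤ n, 0 < zv k := fun k hk =>
    mul_pos (Real.rpow_pos_of_pos hu _) (prod_pos fun j hj => hp j (by simp at hj ⊢; omega))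
  have hratio : ∀ j ∈ Icc 1 (n + 1), zv j / zv (j - 1) = r * p j := by
    intro j hj
    obtain ⟨k, rfl⟩ : ∃ k, j = k + 1 := ⟨j - 1, by simp at hj; omega⟩
    rw [Nat.add_sub_cancel, div_eq_iff (hzv_pos k (by simp at hj; omega)).ne']
    exact rpow_mul_prod_Icc_succ hu _ p k
  have hQ : ratioSum n zv = r := by rw [ratioSum, sum_congr rfl hratio, ← mul_sum, hsum, mul_one]
  have hν : ∀ b ∈ Icc 1 (n + 1), ν (b - 1) = p b + ν b := by
    intro b hb
    rw [mem_Icc] at hb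
    show ∑ j ∈ Icc (b - 1 + 1) (n + 1), p j = p b + ∑ j ∈ Icc (b + 1) (n + 1), p j
    rw [Nat.sub_add_cancel hb.1, Icc_add_one_left_eq_Ioc, add_sum_Ioc_eq_sum_Icc hb.2]
  have hfun : (fun t => Real.log (ratioSum n (update zv a t))) = fun t : ℝ =>
      Real.log (∑ j ∈ Finset.Icc 1 (n + 1),
        (if j = a then t else zv j) / (if j - 1 = a then t else zv (j - 1))) := by
    simp only [ratioSum, update_apply]
  have hnext : zv (a + 1) / zv a = r * p (a + 1) := hratio (a + 1) (by simp; omega)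
  have hνa : ν a = p (a + 1) + ν (a + 1) := hν (a + 1) (by simp; omega)
  rw [← hfun, mul_deriv_log_ratioSum_update zv ha1 ha (hzv_pos a ha).ne' (hQ ▸ hr.ne'), hQ,
    hratio a (by simp; omega), hnext, sum_cartanN_mul ν ha1 ha, hν a (by simp; omega), hνa,
    show ν 0 = 1 from hsum, show ν (n + 1) = 0 by simp [ν], ite_self]
  field_simp
  ring

/-- Equation of state: with `p_1,…,p_{n+1} > 0` summing to `1`, `u = p_1⋯p_{n+1}`,
`z_a = u^{-a/(n+1)} p_1⋯p_a` (so `z_0 = z_{n+1} = 1`) and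
`ν_a = p_{a+1} + ⋯ + p_{n+1}`, for each `a ∈ [1,n]` the partial derivative identity
`z_a ∂/∂z_a log(∑_{j=1}^{n+1} z_j/z_{j-1}) = δ_{a,1} - ∑_b C_{ab} ν_b` holds. -/
theorem equation_of_state (n : ℕ) (hn : 1 ≤ n) (p : ℕ → ℝ)
    (hp : ∀ a ∈ Finset.Icc 1 (n + 1), 0 < p a)
    (hsum : ∑ a ∈ Finset.Icc 1 (n + 1), p a = 1) :
    ∀ a, 1 ≤ a → a ≤ n →
      (let u : ℝ := ∏ j ∈ Finset.Icc 1 (n + 1), p j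
       let zv : ℕ → ℝ := fun b => u ^ (-(b : ℝ) / (n + 1)) * ∏ j ∈ Finset.Icc 1 b, p j
       let ν : ℕ → ℝ := fun b => ∑ j ∈ Finset.Icc (b + 1) (n + 1), p j
       zv a * deriv (fun t : ℝ =>
          Real.log (∑ j ∈ Finset.Icc 1 (n + 1),
            (if j = a then t else zv j) / (if j - 1 = a then t else zv (j - 1)))) (zv a)
        = (if a = 1 then 1 else 0) - ∑ b ∈ Finset.Icc 1 n, (cartanN a b : ℝ) * ν b) :=
  equation_of_state_general n p hp hsum
end

section
/- Under the A_2 carrier Markov chain with transition probabilities weighted by p_1, p_2, p_3 parametrized as p_1 = z_1^2 z_2 / N, p_2 = z_2^2 / N, p_3 = z_1 / N with N = z_1 + z_1^2 z_2 + z_2^2, the measure π on six states {11,12,13,22,23,33} given by π_11 = z_1^4 z_2^2/Q, π_12 = z_1^2 z_2^3/Q, π_13 = z_1^3 z_2/Q, π_22 = z_2^4/Q, π_23 = z_1 z_2^2/Q, π_33 = z_1^2/Q with Q = z_1^2 + z_1^3 z_2 + z_1 z_2^2 + z_1^4 z_2^2 + z_1^2 z_2^3 + z_2^4, is stationary: it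 satisfies the six balance equations π_11 = p_1(π_11+π_12+π_13), π_12 = p_1 π_22 + p_1 π_23 + p_2 π_11, π_13 = p_1 π_33 + p_3 π_11 + p_3 π_12, π_22 = p_2(π_12+π_22+π_23), π_23 = p_2 π_13 + p_2 π_33 + p_3 π_22, π_33 = p_3(π_13+π_23+π_33), and sums to 1. -/
/-!
With weights `a = z₁²z₂`, `b = z₂²`, `c = z₁` the transition probabilities are `pᵢ = xᵢ / (a + b + c)`
and the measure is `π_ij = xᵢ xⱼ / h₂(a, b, c)`, where `h₂` is the complete homogeneous symmetric
polynomial of degree two. Each balance equation then reduces to `xᵢ xⱼ = xᵢ xⱼ (a + b + c) / (a + b + c)`,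
and the six products sum to `h₂`.
-/

theorem carrier_stationary_of_weights {K : Type*} [Field K] (a b c : K)
    (hS : a + b + c ≠ 0) (hQ : a ^ 2 + b ^ 2 + c ^ 2 + a * b + a * c + b * c ≠ 0) :
    let S := a + b + c
    let Q := a ^ 2 + b ^ 2 + c ^ 2 + a * b + a * c + b * c
    a * a / Q = a / S * (a * a / Q + a * b / Q + a * c / Q) ∧
    a * b / Q = a / S * (b * b / Q) + a / S * (b * c / Q) + b / S * (a * a / Q) ∧
    a * c / Q = a / S * (c * c / Q) + c / S * (a * a / Q) + c / S * (a * b / Q) ∧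
    b * b / Q = b / S * (a * b / Q + b * b / Q + b * c / Q) ∧
    b * c / Q = b / S * (a * c / Q) + b / S * (c * c / Q) + c / S * (b * b / Q) ∧
    c * c / Q = c / S * (a * c / Q + b * c / Q + c * c / Q) ∧
    a * a / Q + a * b / Q + a * c / Q + b * b / Q + b * c / Q + c * c / Q = 1 := by
  intro S Q
  refine ⟨?_, ?_, ?_, ?_, ?_, ?_, ?_⟩ <;> simp only [S, Q] <;> field_simp <;> ring

/-- Stationarity of the explicit measure on the six-element `A_2` carrier crystal
`B^{(1)}_2`, together with its normalization. -/
theorem carrier_stationary_A2 (z1 z2 : ℝ) (h1 : 0 < z1) (h2 : 0 < z2) :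
    let N : ℝ := z1 + z1 ^ 2 * z2 + z2 ^ 2
    let p1 : ℝ := z1 ^ 2 * z2 / N
    let p2 : ℝ := z2 ^ 2 / N
    let p3 : ℝ := z1 / N
    let Q : ℝ := z1 ^ 2 + z1 ^ 3 * z2 + z1 * z2 ^ 2 + z1 ^ 4 * z2 ^ 2 +
      z1 ^ 2 * z2 ^ 3 + z2 ^ 4
    let π11 : ℝ := z1 ^ 4 * z2 ^ 2 / Q
    let π12 : ℝ := z1 ^ 2 * z2 ^ 3 / Q
    let π13 : ℝ := z1 ^ 3 * z2 / Q
    let π22 : ℝ := z2 ^ 4 / Q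
    let π23 : ℝ := z1 * z2 ^ 2 / Q
    let π33 : ℝ := z1 ^ 2 / Q
    π11 = p1 * (π11 + π12 + π13) ∧
    π12 = p1 * π22 + p1 * π23 + p2 * π11 ∧
    π13 = p1 * π33 + p3 * π11 + p3 * π12 ∧
    π22 = p2 * (π12 + π22 + π23) ∧
    π23 = p2 * π13 + p2 * π33 + p3 * π22 ∧
    π33 = p3 * (π13 + π23 + π33) ∧
    π11 + π12 + π13 + π22 + π23 + π33 = 1 := by
  have key := carrier_stationary_of_weights (z1 ^ 2 * z2) (z2 ^ 2) z1 (by positivity) (by positivity)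
  intro N p1 p2 p3 Q π11 π12 π13 π22 π23 π33
  simp only [N, p1, p2, p3, Q, π11, π12, π13, π22, π23, π33] at key ⊢
  ring_nf at key ⊢
  exact key
end

section
/- In the completely random case w_1 = ⋯ = w_{n+1} = 1, the column density η_i^{(a)} = s_{((i−1)^{a−1})} s_{(i^{a+1})} / (s_{(i^a)} s_{((i−1)^a)} s_{(1)}) evaluated at all variables equal to 1 equals a(n+1−a)/((n+1)(i+a−1)(i+a)). -/
/-!
With `G n = ∏_{t<n} t!`, MacMahon's box product has the closed form
`G(a+b+c) G(a) G(b) G(c) / (G(a+b) G(b+c) G(c+a))`. Since `G(n+1) = G(n) n!`, moving one unit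
from the second side of the box to the first changes the product by an explicit ratio of
factorials. With `m = n + 1 - a`, the numerator of the density arises from the two factors of
its denominator by two such moves, `(a, m, i-1) ↦ (a-1, m+1, i-1)` and `(a, m, i) ↦ (a+1, m-1, i)`,
and the product of the two ratios is `a m / ((i+a-1)(i+a))`; finally `s_{(1)}(1,…,1) = n + 1`.
-/

/-- `s_{(i^a)}(1,…,1)` in `n+1` variables, via the hook-content / Weyl dimension
formula: `∏_{j=1}^a ∏_{k=1}^{n+1-a} (i+j+k-1)/(j+k-1)`. -/
noncomputable def dimRect (n a i : ℕ) : ℝ :=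
  ∏ j ∈ Finset.Icc 1 a, ∏ k ∈ Finset.Icc 1 (n + 1 - a),
    ((i + j + k - 1 : ℕ) : ℝ) / ((j + k - 1 : ℕ) : ℝ)

open Finset Nat

/-- `∏_{t<n} t!`, the Barnes G-function at `n + 1`. -/
noncomputable def factorialProd (n : ℕ) : ℝ := ∏ t ∈ range n, (t ! : ℝ)

lemma factorialProd_succ (n : ℕ) : factorialProd (n + 1) = factorialProd n * n ! :=
  prod_range_succ _ _

lemma factorialProd_pos (n : ℕ) : 0 < factorialProd n :=
  prod_pos fun t _ => by positivity

lemma prod_Icc_natCast_add (c m : ℕ) :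
    ∏ k ∈ Icc 1 m, ((c + k : ℕ) : ℝ) = (c + m)! / c ! := by
  induction m with
  | zero => simp [(factorial_pos c).ne']
  | succ m ih =>
    rw [prod_Icc_succ_top (by omega), ih, ← add_assoc, factorial_succ]
    push_cast
    field_simp

/-- MacMahon's product, counting plane partitions in an `a × b × c` box. -/
noncomputable def macMahon (a b c : ℕ) : ℝ :=
  ∏ j ∈ Icc 1 a, ∏ k ∈ Icc 1 b, ((c + j + k - 1 : ℕ) : ℝ) / ((j + k - 1 : ℕ) : ℝ)

lemma dimRect_eq_macMahon (n a i : ℕ) : dimRect n a i = macMahon a (n + 1 - a) i := rfl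

lemma macMahon_pos (a b c : ℕ) : 0 < macMahon a b c :=
  prod_pos fun j hj => prod_pos fun k hk => by
    have := (mem_Icc.mp hj).1
    have := (mem_Icc.mp hk).1
    exact _root_.div_pos (Nat.cast_pos.mpr (by omega)) (Nat.cast_pos.mpr (by omega))

lemma macMahon_succ_left (a b c : ℕ) :
    macMahon (a + 1) b c = macMahon a b c * ((c + a + b)! * a ! / ((c + a)! * (a + b)!)) := by
  rw [macMahon, prod_Icc_succ_top (by omega), ← macMahon, prod_div_distrib]
  congr 1
  have hnum : ∀ k, c + (a + 1) + k - 1 = c + a + k := by omega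
  have hden : ∀ k, a + 1 + k - 1 = a + k := by omega
  simp only [hnum, hden, prod_Icc_natCast_add, div_div_div_eq]

lemma macMahon_eq_factorialProd (a b c : ℕ) :
    macMahon a b c = factorialProd (a + b + c) * factorialProd a * factorialProd b *
      factorialProd c / (factorialProd (a + b) * factorialProd (b + c) * factorialProd (c + a)) := by
  have := fun n => (factorialProd_pos n).ne'
  induction a with
  | zero =>
    rw [macMahon, Icc_eq_empty (by omega), prod_empty]
    simp only [zero_add, add_zero, mul_one, show factorialProd 0 = 1 from prod_range_zero _]
    rw [mul_comm (factorialProd b), div_self (by simp [this])]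
  | succ a ih =>
    rw [macMahon_succ_left, ih, show a + 1 + b + c = a + b + c + 1 by ring,
      show a + 1 + b = a + b + 1 by ring, show c + (a + 1) = c + a + 1 by ring,
      show c + a + b = a + b + c by ring]
    simp only [factorialProd_succ]
    field_simp

lemma macMahon_succ_mid (a b c : ℕ) :
    macMahon a (b + 1) c = macMahon (a + 1) b c * (b ! * (c + a)! / (a ! * (b + c)!)) := by
  rw [macMahon_eq_factorialProd, macMahon_eq_factorialProd,
    show a + (b + 1) + c = a + 1 + b + c by ring, show a + (b + 1) = a + 1 + b by ring,
    show b + 1 + c = b + c + 1 by ring, show c + (a + 1) = c + a + 1 by ring]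
  simp only [factorialProd_succ]
  have := fun n => (factorialProd_pos n).ne'
  field_simp

lemma dimRect_one_one (n : ℕ) : dimRect n 1 1 = n + 1 := by
  rw [dimRect_eq_macMahon, Nat.add_sub_cancel, macMahon_succ_left, macMahon,
    Icc_eq_empty (by omega), prod_empty, add_comm 1 0, add_comm (0 + 1) n, factorial_succ]
  simp only [zero_add, factorial_zero, factorial_one]
  push_cast
  field_simp

/-- In the completely random case `w_1 = ⋯ = w_{n+1} = 1`, the column density
`s_{((i-1)^{a-1})} s_{(i^{a+1})}/(s_{(i^a)} s_{((i-1)^a)} s_{(1)})` equals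
`a(n+1-a)/((n+1)(i+a-1)(i+a))`. -/
theorem eta_random_case (n a i : ℕ) (ha1 : 1 ≤ a) (han : a ≤ n) (hi : 1 ≤ i) :
    dimRect n (a - 1) (i - 1) * dimRect n (a + 1) i /
      (dimRect n a i * dimRect n a (i - 1) * dimRect n 1 1) =
    ((a * (n + 1 - a) : ℕ) : ℝ) /
      (((n + 1 : ℕ) : ℝ) * ((i + a - 1 : ℕ) : ℝ) * ((i + a : ℕ) : ℝ)) := by
  obtain ⟨p, rfl⟩ : ∃ p, a = p + 1 := ⟨a - 1, by omega⟩
  obtain ⟨q, rfl⟩ : ∃ q, i = q + 1 := ⟨i - 1, by omega⟩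
  obtain ⟨r, rfl⟩ : ∃ r, n = p + r + 1 := ⟨n - p - 1, by omega⟩
  -- the box sides `n + 1 - a` of the four factors are now `r + 2`, `r`, `r + 1`, `r + 1`
  rw [dimRect_one_one]
  simp only [dimRect_eq_macMahon, Nat.add_sub_cancel, show p + r + 1 + 1 - p = r + 1 + 1 by omega,
    show p + r + 1 + 1 - (p + 1 + 1) = r by omega, show p + r + 1 + 1 - (p + 1) = r + 1 by omega,
    show q + 1 + (p + 1) - 1 = q + p + 1 by omega]
  rw [macMahon_succ_mid p (r + 1) q, macMahon_succ_mid (p + 1) r (q + 1),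
    show r + (q + 1) = r + 1 + q by ring, show q + 1 + (p + 1) = q + p + 1 + 1 by ring]
  have := (macMahon_pos (p + 1) (r + 1) q).ne'
  have := (macMahon_pos (p + 1 + 1) r (q + 1)).ne'
  push_cast [Nat.factorial_succ]
  field_simp
end

section
/- For fixed distinct positive reals w_1 > w_2 > ⋯ > w_{n+1} > 0, the rectangular Schur polynomial satisfies lim_{i→∞} s_{(i^a)}(w)/(w_1⋯w_a)^i = (w_1⋯w_a)^{n+1−a} · Δ(w_1,...,w_a) Δ(w_{a+1},...,w_{n+1}) / Δ(w_1,...,w_{n+1}), where Δ denotes the Vandermonde product ∏_{j<k}(x_j − x_k). -/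
/-- The Schur polynomial of the rectangle `(i^a)` in the `n+1` variables
`w 0, …, w n`, via the bialternant formula. -/
noncomputable def schurRectN (n : ℕ) (w : ℕ → ℝ) (a i : ℕ) : ℝ :=
  (Matrix.det (Matrix.of fun j k : Fin (n + 1) =>
      w (k : ℕ) ^ ((if (j : ℕ) < a then i else 0) + n - (j : ℕ)))) /
  (Matrix.det (Matrix.of fun j k : Fin (n + 1) => w (k : ℕ) ^ (n - (j : ℕ))))

/-- Vandermonde product `Δ(x_0,…,x_{m-1}) = ∏_{j<k}(x_j - x_k)`. -/
noncomputable def vand (m : ℕ) (x : ℕ → ℝ) : ℝ :=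
  ∏ j ∈ Finset.range m, ∏ k ∈ Finset.range m, if j < k then x j - x k else 1

open Finset Matrix

lemma det_desc (m : ℕ) (x : ℕ → ℝ) :
    (Matrix.of fun j k : Fin m => x (k:ℕ) ^ (m - 1 - (j:ℕ))).det = vand m x := by
  set y : Fin m → ℝ := fun k => x (m - 1 - (k:ℕ)) with hy
  have hsub : (Matrix.of fun j k : Fin m => x (k:ℕ) ^ (m - 1 - (j:ℕ))).submatrix
      Fin.revPerm Fin.revPerm = (Matrix.vandermonde y)ᵀ := by
    ext j k
    have hj := j.isLt
    have hk := k.isLt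
    simp only [Matrix.submatrix_apply, Matrix.of_apply, Matrix.transpose_apply,
      Matrix.vandermonde_apply, hy, Fin.revPerm_apply, Fin.val_rev]
    have h2 : m - 1 - (m - ((j:ℕ)+1)) = (j:ℕ) := by omega
    have h3 : m - ((k:ℕ)+1) = m - 1 - (k:ℕ) := by omega
    rw [h2, h3]
  have h1 : (Matrix.of fun j k : Fin m => x (k:ℕ) ^ (m - 1 - (j:ℕ))).det
      = (Matrix.vandermonde y).det := by
    rw [← Matrix.det_submatrix_equiv_self Fin.revPerm, hsub, Matrix.det_transpose]
  rw [h1, Matrix.det_vandermonde]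
  have step1 : ∀ i : Fin m, (∏ j ∈ Finset.Ioi i, (y j - y i))
      = ∏ j : Fin m, (if i < j then y j - y i else 1) := by
    intro i
    rw [← Finset.prod_filter]
    congr 1
    ext j; simp
  calc (∏ i : Fin m, ∏ j ∈ Finset.Ioi i, (y j - y i))
      = ∏ i : Fin m, ∏ j : Fin m, (if i < j then y j - y i else 1) := by
        exact Finset.prod_congr rfl fun i _ => step1 i
    _ = ∏ i : Fin m, ∏ j : Fin m,
          (if Fin.rev i < Fin.rev j then y (Fin.rev j) - y (Fin.rev i) else 1) := by
        rw [← Equiv.prod_comp Fin.revPerm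
          (fun i => ∏ j : Fin m, (if i < j then y j - y i else 1))]
        refine Finset.prod_congr rfl fun i _ => ?_
        rw [← Equiv.prod_comp Fin.revPerm
          (fun j => (if Fin.revPerm i < j then y j - y (Fin.revPerm i) else 1))]
        rfl
    _ = ∏ i : Fin m, ∏ j : Fin m,
          (if (j:ℕ) < (i:ℕ) then x (j:ℕ) - x (i:ℕ) else 1) := by
        refine Finset.prod_congr rfl fun i _ => Finset.prod_congr rfl fun j _ => ?_
        have hj := j.isLt
        have hi := i.isLt
        have hcond : Fin.rev i < Fin.rev j ↔ (j:ℕ) < (i:ℕ) := by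
          rw [Fin.lt_def, Fin.val_rev, Fin.val_rev]
          omega
        have hyj : y (Fin.rev j) = x (j:ℕ) := by
          simp only [hy, Fin.val_rev]; congr 1; omega
        have hyi : y (Fin.rev i) = x (i:ℕ) := by
          simp only [hy, Fin.val_rev]; congr 1; omega
        rw [hyj, hyi]
        exact if_congr hcond rfl rfl
    _ = ∏ i ∈ Finset.range m, ∏ j ∈ Finset.range m,
          (if j < i then x j - x i else 1) := by
        rw [← Fin.prod_univ_eq_prod_range (fun i => ∏ j ∈ Finset.range m,
          (if j < i then x j - x i else 1))]
        refine Finset.prod_congr rfl fun i _ => ?_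
        exact Fin.prod_univ_eq_prod_range (fun j => (if j < (i:ℕ) then x j - x (i:ℕ) else 1)) m
    _ = vand m x := by rw [vand, Finset.prod_comm]

/-- Asymptotics of rectangular Schur polynomials: for strictly decreasing positive
`w 0 > ⋯ > w n > 0`,
`s_{(i^a)}(w)/(w_1⋯w_a)^i → (w_1⋯w_a)^{n+1-a} Δ(w_1,…,w_a)Δ(w_{a+1},…,w_{n+1})/Δ(w)`. -/
theorem schur_rect_asymptotics (n a : ℕ) (ha : a ≤ n + 1) (w : ℕ → ℝ)
    (hdec : ∀ j, j < n → w (j + 1) < w j) (hpos : 0 < w n) :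
    Filter.Tendsto
      (fun i : ℕ => schurRectN n w a i / (∏ j ∈ Finset.range a, w j) ^ i)
      Filter.atTop
      (nhds ((∏ j ∈ Finset.range a, w j) ^ (n + 1 - a) *
        vand a w * vand (n + 1 - a) (fun j => w (a + j)) / vand (n + 1) w)) := by
  classical
  -- monotonicity and positivity facts
  have hwle : ∀ j k : ℕ, j ≤ k → k ≤ n → w k ≤ w j := by
    intro j k hjk hk
    induction k, hjk using Nat.le_induction with
    | base => exact le_refl _
    | succ k hjk ih =>
      have h1 : w (k+1) < w k := hdec k (by omega)
      have h2 := ih (by omega)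
      linarith
  have hwlt : ∀ j k : ℕ, j < k → k ≤ n → w k < w j := by
    intro j k hjk hk
    have h1 : w k ≤ w (j+1) := hwle _ _ hjk hk
    have h2 := hdec j (by omega)
    linarith
  have hwpos : ∀ j, j ≤ n → 0 < w j := fun j hj =>
    lt_of_lt_of_le hpos (hwle j n hj le_rfl)
  set P : ℝ := ∏ j ∈ Finset.range a, w j with hPdef
  have hP : 0 < P := Finset.prod_pos
    (fun j hj => hwpos j (by have := Finset.mem_range.1 hj; omega))
  have hPfin : ∏ k : Fin a, w (k:ℕ) = P := by
    rw [hPdef]; exact Fin.prod_univ_eq_prod_range (fun j => w j) a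
  set S0 : Finset (Fin (n+1)) := Finset.univ.filter (fun k => (k:ℕ) < a) with hS0
  have hPS0 : ∏ k ∈ S0, w (k:ℕ) = P := by
    rw [hS0, Finset.prod_filter, hPdef,
      Fin.prod_univ_eq_prod_range (fun j => if j < a then w j else 1) (n+1),
      ← Finset.prod_filter]
    congr 1
    ext j
    simp only [Finset.mem_filter, Finset.mem_range]
    omega
  have hcardS0 : S0.card = a := by
    have hmap : S0 = Finset.univ.map (Fin.castLEEmb ha) := by
      ext k
      simp only [hS0, Finset.mem_filter, Finset.mem_univ, true_and, Finset.mem_map]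
      constructor
      · intro hk
        exact ⟨⟨(k:ℕ), hk⟩, by ext; simp⟩
      · rintro ⟨j, -, rfl⟩
        simp
    rw [hmap, Finset.card_map, Finset.card_univ, Fintype.card_fin]
  -- coefficient, ratio, and tail functions
  set c : Equiv.Perm (Fin (n+1)) → ℝ := fun σ => ((Equiv.Perm.sign σ : ℤ) : ℝ) with hc
  set r : Equiv.Perm (Fin (n+1)) → ℝ :=
    fun σ => ∏ k ∈ Finset.univ.filter (fun k : Fin (n+1) => ((σ k : Fin (n+1)) : ℕ) < a),
      w (k:ℕ) with hr
  set t : Equiv.Perm (Fin (n+1)) → ℝ :=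
    fun σ => ∏ k : Fin (n+1), w (k:ℕ) ^ (n - ((σ k : Fin (n+1)) : ℕ)) with ht
  set D : ℝ := (Matrix.of fun j k : Fin (n + 1) => w (k : ℕ) ^ (n - (j : ℕ))).det with hD
  -- numerator expansion
  have hnum : ∀ i : ℕ, (Matrix.of fun j k : Fin (n + 1) =>
        w (k : ℕ) ^ ((if (j : ℕ) < a then i else 0) + n - (j : ℕ))).det
      = ∑ σ : Equiv.Perm (Fin (n+1)), c σ * (r σ ^ i * t σ) := by
    intro i
    rw [Matrix.det_apply']
    refine Finset.sum_congr rfl fun σ _ => ?_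
    congr 1
    have hterm : ∀ k : Fin (n+1),
        (Matrix.of fun j k : Fin (n + 1) =>
          w (k : ℕ) ^ ((if (j : ℕ) < a then i else 0) + n - (j : ℕ))) (σ k) k
        = (if ((σ k : Fin (n+1)) : ℕ) < a then w (k:ℕ) ^ i else 1)
            * w (k:ℕ) ^ (n - ((σ k : Fin (n+1)) : ℕ)) := by
      intro k
      have hσk : ((σ k : Fin (n+1)) : ℕ) < n + 1 := (σ k).isLt
      rw [Matrix.of_apply]
      by_cases h : ((σ k : Fin (n+1)) : ℕ) < a
      · rw [if_pos h, if_pos h, ← pow_add]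
        congr 1
        omega
      · rw [if_neg h, if_neg h, one_mul]
        congr 1
        omega
    rw [Finset.prod_congr rfl (fun k _ => hterm k), Finset.prod_mul_distrib,
      ← Finset.prod_filter, Finset.prod_pow]
  -- rewrite the sequence
  have key : ∀ i : ℕ, schurRectN n w a i / P ^ i
      = (∑ σ : Equiv.Perm (Fin (n+1)), c σ * ((r σ / P) ^ i * t σ)) / D := by
    intro i
    rw [schurRectN, hnum i, ← hD, div_right_comm, Finset.sum_div]
    congr 1
    refine Finset.sum_congr rfl fun σ _ => ?_
    have hPi : (P : ℝ) ^ i ≠ 0 := pow_ne_zero _ hP.ne'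
    rw [div_pow]
    field_simp
  -- block matrices for the limit
  set T : Matrix (Fin a) (Fin a) ℝ :=
    Matrix.of fun j k => w (k:ℕ) ^ (n - (j:ℕ)) with hT
  set B : Matrix (Fin (n+1-a)) (Fin (n+1-a)) ℝ :=
    Matrix.of fun j k => w (a + (k:ℕ)) ^ (n - (a + (j:ℕ))) with hB
  set M : Matrix (Fin (n+1)) (Fin (n+1)) ℝ := Matrix.of fun j k =>
    if (j:ℕ) < a then (if (k:ℕ) < a then w (k:ℕ) ^ (n - (j:ℕ)) else 0)
    else (if (k:ℕ) < a then 0 else w (k:ℕ) ^ (n - (j:ℕ))) with hM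
  set L : Equiv.Perm (Fin (n+1)) → ℝ := fun σ =>
    if Finset.univ.filter (fun k : Fin (n+1) => ((σ k : Fin (n+1)) : ℕ) < a) = S0
      then c σ * t σ else 0 with hL
  -- each term converges
  have hterm_tendsto : ∀ σ : Equiv.Perm (Fin (n+1)),
      Filter.Tendsto (fun i : ℕ => c σ * ((r σ / P) ^ i * t σ)) Filter.atTop (nhds (L σ)) := by
    intro σ
    by_cases hσ : Finset.univ.filter (fun k : Fin (n+1) => ((σ k : Fin (n+1)) : ℕ) < a) = S0
    · have hrσ : r σ = P := by
        rw [hr]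
        simp only
        rw [hσ]
        exact hPS0
      have heq : (fun i : ℕ => c σ * ((r σ / P) ^ i * t σ)) = fun _ : ℕ => c σ * t σ := by
        funext i
        rw [hrσ, div_self hP.ne', one_pow, one_mul]
      rw [heq]
      simp only [hL, if_pos hσ]
      exact tendsto_const_nhds
    · -- the ratio is < 1
      set S : Finset (Fin (n+1)) :=
        Finset.univ.filter (fun k : Fin (n+1) => ((σ k : Fin (n+1)) : ℕ) < a) with hSdef
      have hcardS : S.card = a := by
        have hmapS : S = S0.map σ.symm.toEmbedding := by
          ext k
          rw [Finset.mem_map_equiv]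
          simp [hSdef, hS0]
        rw [hmapS, Finset.card_map, hcardS0]
      set f := S.orderEmbOfFin hcardS with hf
      have hfle : ∀ m : ℕ, (hm : m < a) → m ≤ ((f ⟨m, hm⟩ : Fin (n+1)) : ℕ) := by
        intro m
        induction m with
        | zero => intro hm; exact Nat.zero_le _
        | succ p ih =>
          intro hm
          have hp : p < a := by omega
          have h1 := ih hp
          have h2 : (f ⟨p, hp⟩ : Fin (n+1)) < f ⟨p+1, hm⟩ :=
            f.strictMono (by rw [Fin.lt_def]; exact Nat.lt_succ_self p)
          rw [Fin.lt_def] at h2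
          omega
      have hfle' : ∀ j : Fin a, (j:ℕ) ≤ ((f j : Fin (n+1)) : ℕ) := by
        intro j
        have := hfle (j:ℕ) j.isLt
        simpa [Fin.eta] using this
      have hSmap : S = Finset.univ.map (f.toEmbedding) := by
        ext k
        simp only [Finset.mem_map, Finset.mem_univ, true_and]
        constructor
        · intro hk
          have hrange := Finset.range_orderEmbOfFin S hcardS
          have hmem : k ∈ Set.range f := by rw [hrange]; exact hk
          obtain ⟨j, hj⟩ := hmem
          exact ⟨j, hj⟩
        · rintro ⟨j, rfl⟩
          exact Finset.orderEmbOfFin_mem S hcardS j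
      have hprodS : r σ = ∏ j : Fin a, w ((f j : Fin (n+1)) : ℕ) := by
        have h1 : r σ = ∏ k ∈ S, w (k:ℕ) := rfl
        rw [h1, hSmap, Finset.prod_map]
        rfl
      have hex : ∃ j : Fin a, (j:ℕ) < ((f j : Fin (n+1)) : ℕ) := by
        by_contra hcon
        push_neg at hcon
        apply hσ
        show S = S0
        ext k
        simp only [hS0, Finset.mem_filter, Finset.mem_univ, true_and]
        constructor
        · intro hk
          rw [hSmap, Finset.mem_map] at hk
          obtain ⟨j, -, rfl⟩ := hk
          exact lt_of_le_of_lt (hcon j) j.isLt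
        · intro hk
          rw [hSmap, Finset.mem_map]
          refine ⟨⟨(k:ℕ), hk⟩, Finset.mem_univ _, ?_⟩
          have h1 := hfle (k:ℕ) hk
          have h2 := hcon ⟨(k:ℕ), hk⟩
          exact Fin.ext (by simp at h1 h2 ⊢; omega)
      obtain ⟨j0, hj0⟩ := hex
      have hrlt : r σ < P := by
        rw [hprodS, ← hPfin]
        refine Finset.prod_lt_prod
          (fun j _ => hwpos _ (by have := (f j).isLt; omega))
          (fun j _ => hwle _ _ (hfle' j) (by have := (f j).isLt; omega))
          ⟨j0, Finset.mem_univ _, hwlt _ _ hj0 (by have := (f j0).isLt; omega)⟩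
      have hrpos : 0 ≤ r σ / P := by
        apply div_nonneg _ hP.le
        rw [hr]
        exact Finset.prod_nonneg fun k _ => (hwpos (k:ℕ) (by have := k.isLt; omega)).le
      have h1 : r σ / P < 1 := (div_lt_one hP).2 hrlt
      have h2 : Filter.Tendsto (fun i : ℕ => (r σ / P)^i) Filter.atTop (nhds 0) :=
        tendsto_pow_atTop_nhds_zero_of_lt_one hrpos h1
      have h3 := (h2.mul_const (t σ)).const_mul (c σ)
      simp only [hL, if_neg hσ]
      have hσ' : ¬ (Finset.univ.filter (fun k : Fin (n+1) => ((σ k : Fin (n+1)) : ℕ) < a) = S0) := hσ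
      simpa [hσ'] using h3
  -- limit of the sum is det M
  have hsumL : (∑ σ : Equiv.Perm (Fin (n+1)), L σ) = M.det := by
    rw [Matrix.det_apply']
    refine Finset.sum_congr rfl fun σ _ => ?_
    by_cases hσ : Finset.univ.filter (fun k : Fin (n+1) => ((σ k : Fin (n+1)) : ℕ) < a) = S0
    · simp only [hL, if_pos hσ, ht, hc]
      congr 1
      refine Finset.prod_congr rfl fun k _ => ?_
      have hiff : ((σ k : Fin (n+1)) : ℕ) < a ↔ (k:ℕ) < a := by
        have h1 := Finset.ext_iff.1 hσ k
        simpa [hS0] using h1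
      rw [hM, Matrix.of_apply]
      by_cases hk : (k:ℕ) < a
      · rw [if_pos (hiff.2 hk), if_pos hk]
      · rw [if_neg (fun h => hk (hiff.1 h)), if_neg hk]
    · simp only [hL, if_neg hσ]
      have hex : ∃ k : Fin (n+1), ¬(((σ k : Fin (n+1)) : ℕ) < a ↔ (k:ℕ) < a) := by
        by_contra hcon
        push_neg at hcon
        apply hσ
        ext k
        simp only [Finset.mem_filter, Finset.mem_univ, true_and, hS0]
        exact hcon k
      obtain ⟨k0, hk0⟩ := hex
      have hzero : (M (σ k0) k0) = 0 := by
        rw [hM, Matrix.of_apply]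
        by_cases h1 : ((σ k0 : Fin (n+1)) : ℕ) < a
        · rw [if_pos h1, if_neg (by tauto)]
        · rw [if_neg h1, if_pos (by tauto)]
      have hzprod : ∏ k : Fin (n+1), M (σ k) k = 0 :=
        Finset.prod_eq_zero (Finset.mem_univ k0) hzero
      rw [hzprod, mul_zero]
  have hMdet : M.det = T.det * B.det := by
    have hab : a + (n + 1 - a) = n + 1 := by omega
    let e : Fin a ⊕ Fin (n+1-a) ≃ Fin (n+1) := finSumFinEquiv.trans (finCongr hab)
    have hl : ∀ j : Fin a, ((e (Sum.inl j) : Fin (n+1)) : ℕ) = (j:ℕ) := by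
      intro j; simp [e, finCongr_apply]
    have hrr : ∀ j : Fin (n+1-a), ((e (Sum.inr j) : Fin (n+1)) : ℕ) = a + (j:ℕ) := by
      intro j; simp [e, finCongr_apply]
    have hsub : M.submatrix e e = Matrix.fromBlocks T 0 0 B := by
      ext p q
      rcases p with j | j <;> rcases q with k | k
      · rw [Matrix.submatrix_apply, Matrix.fromBlocks_apply₁₁, hM, Matrix.of_apply,
          hl, hl, if_pos j.isLt, if_pos k.isLt, hT, Matrix.of_apply]
      · rw [Matrix.submatrix_apply, Matrix.fromBlocks_apply₁₂, hM, Matrix.of_apply,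
          hl, hrr, if_pos j.isLt, if_neg (by omega)]
        rfl
      · rw [Matrix.submatrix_apply, Matrix.fromBlocks_apply₂₁, hM, Matrix.of_apply,
          hrr, hl, if_neg (by omega), if_pos k.isLt]
        rfl
      · rw [Matrix.submatrix_apply, Matrix.fromBlocks_apply₂₂, hM, Matrix.of_apply,
          hrr, hrr, if_neg (by omega), if_neg (by omega), hB, Matrix.of_apply]
    rw [← Matrix.det_submatrix_equiv_self e M, hsub, Matrix.det_fromBlocks_zero₂₁]
  have hTdet : T.det = P ^ (n+1-a) * vand a w := by
    have hTeq : T = Matrix.of fun j k : Fin a =>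
        (w (k:ℕ) ^ (n+1-a)) *
          (Matrix.of fun j' k' : Fin a => w (k':ℕ) ^ (a - 1 - (j':ℕ))) j k := by
      ext j k
      have hj := j.isLt
      simp only [hT, Matrix.of_apply]
      rw [← pow_add]
      congr 1
      omega
    rw [hTeq, Matrix.det_mul_row, det_desc a w, Finset.prod_pow, hPfin]
  have hBdet : B.det = vand (n+1-a) (fun j => w (a + j)) := by
    have hBeq : B = Matrix.of fun j k : Fin (n+1-a) =>
        (fun u => w (a + u)) (k:ℕ) ^ ((n+1-a) - 1 - (j:ℕ)) := by
      ext j k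
      have hj := j.isLt
      simp only [hB, Matrix.of_apply]
      congr 1
      omega
    rw [hBeq]
    exact det_desc (n+1-a) (fun u => w (a + u))
  have hDdet : D = vand (n+1) w := by
    rw [hD]
    exact det_desc (n+1) w
  -- assemble
  have hfinal : Filter.Tendsto (fun i : ℕ => schurRectN n w a i / P ^ i)
      Filter.atTop (nhds ((∑ σ : Equiv.Perm (Fin (n+1)), L σ) / D)) := by
    rw [show (fun i : ℕ => schurRectN n w a i / P ^ i)
      = fun i => (∑ σ : Equiv.Perm (Fin (n+1)), c σ * ((r σ / P) ^ i * t σ)) / D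
      from funext key]
    exact (tendsto_finset_sum _ fun σ _ => hterm_tendsto σ).div_const D
  have hval : (∑ σ : Equiv.Perm (Fin (n+1)), L σ) / D
      = P ^ (n + 1 - a) * vand a w * vand (n + 1 - a) (fun j => w (a + j)) / vand (n + 1) w := by
    rw [hsumL, hMdet, hTdet, hBdet, hDdet]
  rw [← hval]
  exact hfinal
end

section
/- The A_1 limit-shape solution solves the TBA difference equation: for ζ > 1, let ε_i = ζ(ζ^i−1)/((ζ+1)(ζ^{i+1}−1)) and Y_i = Q_{i−1}Q_{i+1}, where Q_i = (ζ^{(i+1)/2} − ζ^{−(i+1)/2})/(ζ^{1/2} − ζ^{−1/2}); then for all i ≥ 1 one has min(i,1) − 2ε_i = Y_i(−ε_{i−1} + 2ε_i − ε_{i+1}). -/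
set_option maxHeartbeats 2000000 in
/-- The `A_1` limit-shape solution solves the TBA difference equation: with `z > 1`,
`ζ = z²`, `Q_i = (z^{i+1} - z^{-i-1})/(z - z⁻¹)`, `Y_i = Q_{i-1} Q_{i+1}` and
`ε_i = ζ(ζ^i-1)/((ζ+1)(ζ^{i+1}-1))`, for all `i ≥ 1`:
`1 - 2ε_i = Y_i (2ε_i - ε_{i-1} - ε_{i+1})`. -/
theorem tba_difference_equation_A1 (z : ℝ) (hz : 1 < z) :
    let ζ : ℝ := z ^ 2
    let Q : ℕ → ℝ := fun i => (z ^ (i + 1) - (z⁻¹) ^ (i + 1)) / (z - z⁻¹)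
    let Y : ℕ → ℝ := fun i => Q (i - 1) * Q (i + 1)
    let ε : ℕ → ℝ := fun i => ζ * (ζ ^ i - 1) / ((ζ + 1) * (ζ ^ (i + 1) - 1))
    ∀ i, 1 ≤ i → 1 - 2 * ε i = Y i * (2 * ε i - ε (i - 1) - ε (i + 1)) := by
  intro ζ Q Y ε i hi
  obtain ⟨j, rfl⟩ : ∃ j, i = j + 1 := ⟨i - 1, (Nat.succ_pred_eq_of_pos hi).symm⟩
  have hz0 : (0:ℝ) < z := lt_trans one_pos hz
  have hz1 : z ≠ 0 := ne_of_gt hz0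
  have hzi : z⁻¹ < z := lt_trans (inv_lt_one_of_one_lt₀ hz) hz
  have hd : z - z⁻¹ ≠ 0 := sub_ne_zero.mpr (ne_of_gt hzi)
  simp only [ζ, Q, Y, ε, Nat.add_sub_cancel]
  have hiv : ∀ k : ℕ, (z⁻¹) ^ k = (z ^ k)⁻¹ := fun k => inv_pow z k
  have hsq : (z ^ 2) ^ j = (z ^ j) ^ 2 := pow_right_comm z 2 j
  have key : ∀ k : ℕ, z ^ (j + k) = z ^ j * z ^ k := fun k => pow_add z j k
  have keyζ : ∀ k : ℕ, (z ^ 2) ^ (j + k) = (z ^ j) ^ 2 * (z ^ 2) ^ k := by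
    intro k; rw [pow_add, hsq]
  have r1 : j + 1 + 1 = j + 2 := rfl
  have r2 : j + 2 + 1 = j + 3 := rfl
  rw [r1, r2, hiv, hiv, key 1, key 3, keyζ 1, keyζ 2, keyζ 3, hsq, mul_inv, mul_inv]
  obtain ⟨w, hww, hw1⟩ : ∃ w : ℝ, z ^ j = w ∧ 1 ≤ w := ⟨z ^ j, rfl, one_le_pow₀ hz.le⟩
  rw [hww]
  have hwne : w ≠ 0 := by intro h; rw [h] at hw1; linarith
  have hwz : ∀ k : ℕ, 1 ≤ k → w ^ 2 * (z ^ 2) ^ k - 1 ≠ 0 := by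
    intro k hk
    have h2 : (1:ℝ) < (z ^ 2) ^ k := one_lt_pow₀ (by nlinarith) (by omega)
    have hw2 : (1:ℝ) ≤ w ^ 2 := one_le_pow₀ hw1
    have := le_mul_of_one_le_left (le_of_lt (lt_trans one_pos h2)) hw2
    linarith
  have hζ1 : (z ^ 2 + 1 : ℝ) ≠ 0 := by nlinarith
  have e1 : w ^ 2 * z ^ 2 - 1 ≠ 0 := by simpa using hwz 1 le_rfl
  have e2 := hwz 2 (by omega)
  have e3 := hwz 3 (by omega)
  have hz2 : z ^ 2 ≠ 0 := pow_ne_zero _ hz1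
  have hz3 : z ^ 3 ≠ 0 := pow_ne_zero _ hz1
  simp only [pow_one]
  have hz4 : z * z - 1 ≠ 0 := by nlinarith
  have f1 : z ^ 2 * w ^ 2 - 1 ≠ 0 := by rw [mul_comm]; exact e1
  have f2 : z ^ 4 * w ^ 2 - 1 ≠ 0 := by rw [mul_comm, show z ^ 4 = (z ^ 2) ^ 2 by ring]; exact e2
  have f3 : z ^ 6 * w ^ 2 - 1 ≠ 0 := by rw [mul_comm, show z ^ 6 = (z ^ 2) ^ 3 by ring]; exact e3
  have hz5 : z ^ 2 - 1 ≠ 0 := by nlinarith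
  field_simp
  ring
end
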